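/- arXiv:2402.00194 — 7 statements merged into one kernel-verified Lean document; each statement's English description precedes it below -/
import Mathlib

section
/- Let (x_s) be a sequence of real numbers converging to a limit x*, with errors e_s = |x* - x_s| > 0 for all s. Suppose that for some p > 1 and Q ∈ (0, ∞) the sequence has C-order p, i.e. e_{s+1}/(e_s)^p → Q. Then the corrections c_s = |x_{s+1} - x_s| are eventually positive and satisfy c_{s+1}/(c_s)^p → Q; that is, the sequence has C'-order p with the same asymptotic constant Q. -/
/-!
Write `e s = |x* - x s|` and `c s = |x (s+1) - x s|`. Since `e (s+1) / e s = (e (s+1) / e s ^ p) * e s ^ (p-1)`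
and `p > 1`, the C-order hypothesis forces `e (s+1) / e s → 0`. The triangle inequality gives
`|c s - e s| ≤ e (s+1)`, hence `c s / e s → 1`: corrections and errors are asymptotically equal,
so the quotient `c (s+1) / c s ^ p` has the same limit as `e (s+1) / e s ^ p`.
-/

open Filter Topology

section

variable {ι : Type*} {l : Filter ι}

theorem tendsto_div_of_tendsto_div_rpow {a b : ι → ℝ} {p Q : ℝ} (hp : 1 < p)
    (hb : ∀ i, 0 < b i) (hb0 : Tendsto b l (𝓝 0))
    (h : Tendsto (fun i => a i / b i ^ p) l (𝓝 Q)) :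
    Tendsto (fun i => a i / b i) l (𝓝 0) := by
  have hpow : Tendsto (fun i => b i ^ (p - 1)) l (𝓝 0) := by
    simpa [Real.zero_rpow (sub_pos.2 hp).ne'] using hb0.rpow_const (Or.inr (sub_pos.2 hp).le)
  refine (mul_zero Q ▸ h.mul hpow).congr fun i => ?_
  have hbp : b i ^ p ≠ 0 := (Real.rpow_pos_of_pos (hb i) p).ne'
  rw [Real.rpow_sub_one (hb i).ne']
  field_simp

theorem abs_abs_sub_div_abs_sub_one_le (u v : ℝ) (hu : u ≠ 0) :
    |(|u - v| / |u| - 1)| ≤ |v| / |u| := by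
  have hu' : 0 < |u| := abs_pos.2 hu
  rw [← div_self hu'.ne', ← sub_div, abs_div, abs_of_pos hu']
  refine div_le_div_of_nonneg_right ?_ hu'.le
  simpa using abs_abs_sub_abs_le_abs_sub (u - v) u

theorem tendsto_abs_sub_div_abs {u v : ι → ℝ} (hu : ∀ i, u i ≠ 0)
    (h : Tendsto (fun i => |v i| / |u i|) l (𝓝 0)) :
    Tendsto (fun i => |u i - v i| / |u i|) l (𝓝 1) := by
  rw [← tendsto_sub_nhds_zero_iff]
  exact squeeze_zero_norm (fun i => abs_abs_sub_div_abs_sub_one_le (u i) (v i) (hu i)) h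

theorem eventually_pos_of_tendsto_div_one {a b : ι → ℝ} (hb : ∀ i, 0 < b i)
    (h : Tendsto (fun i => a i / b i) l (𝓝 1)) : ∀ᶠ i in l, 0 < a i := by
  filter_upwards [h.eventually (lt_mem_nhds one_pos)] with i hi
  exact (div_pos_iff_of_pos_right (hb i)).1 hi

end

theorem tendsto_succ_div_rpow_of_tendsto_div_one {a b : ℕ → ℝ} {p Q : ℝ} (hb : ∀ s, 0 < b s)
    (hab : Tendsto (fun s => a s / b s) atTop (𝓝 1))
    (h : Tendsto (fun s => b (s + 1) / b s ^ p) atTop (𝓝 Q)) :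
    Tendsto (fun s => a (s + 1) / a s ^ p) atTop (𝓝 Q) := by
  have hba : Tendsto (fun s => b s / a s) atTop (𝓝 1) := by
    simpa using hab.inv₀ one_ne_zero
  have hbap : Tendsto (fun s => (b s / a s) ^ p) atTop (𝓝 1) := by
    simpa using hba.rpow_const (Or.inl one_ne_zero)
  have hprod : Tendsto (fun s => a (s + 1) / b (s + 1) * (b (s + 1) / b s ^ p) * (b s / a s) ^ p)
      atTop (𝓝 Q) := by
    simpa using ((hab.comp (tendsto_add_atTop_nat 1)).mul h).mul hbap
  refine hprod.congr' ?_
  filter_upwards [eventually_pos_of_tendsto_div_one hb hab] with s has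
  have hb1 : b (s + 1) ≠ 0 := (hb (s + 1)).ne'
  have hbp : b s ^ p ≠ 0 := (Real.rpow_pos_of_pos (hb s) p).ne'
  have hap : a s ^ p ≠ 0 := (Real.rpow_pos_of_pos has p).ne'
  rw [Real.div_rpow (hb s).le has.le]
  field_simp

theorem Cprime_order_of_C_order_general
    (x : ℕ → ℝ) (xstar : ℝ) (p Q : ℝ)
    (hp : 1 < p)
    (hconv : Tendsto x atTop (nhds xstar))
    (hpos : ∀ s, 0 < |xstar - x s|)
    (hC : Tendsto (fun s => |xstar - x (s + 1)| / |xstar - x s| ^ p) atTop (nhds Q)) :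
    (∀ᶠ s in atTop, 0 < |x (s + 1) - x s|) ∧
      Tendsto (fun s => |x (s + 2) - x (s + 1)| / |x (s + 1) - x s| ^ p) atTop (nhds Q) := by
  have herr : Tendsto (fun s => |xstar - x s|) atTop (𝓝 0) := by
    simpa using (hconv.const_sub xstar).abs
  have hratio := tendsto_div_of_tendsto_div_rpow hp hpos herr hC
  have hce : Tendsto (fun s => |x (s + 1) - x s| / |xstar - x s|) atTop (𝓝 1) := by
    simpa only [sub_sub_sub_cancel_left] using
      tendsto_abs_sub_div_abs (fun s => abs_pos.1 (hpos s)) hratio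
  exact ⟨eventually_pos_of_tendsto_div_one hpos hce,
    tendsto_succ_div_rpow_of_tendsto_div_one hpos hce hC⟩

/-- C-order `p > 1` with constant `Q ∈ (0, ∞)` for the errors implies C'-order `p`
with the same constant `Q` for the corrections. -/
theorem Cprime_order_of_C_order
    (x : ℕ → ℝ) (xstar : ℝ) (p Q : ℝ)
    (hp : 1 < p) (hQ : 0 < Q)
    (hconv : Tendsto x atTop (nhds xstar))
    (hpos : ∀ s, 0 < |xstar - x s|)
    (hC : Tendsto (fun s => |xstar - x (s + 1)| / |xstar - x s| ^ p) atTop (nhds Q)) :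
    (∀ᶠ s in atTop, 0 < |x (s + 1) - x s|) ∧
      Tendsto (fun s => |x (s + 2) - x (s + 1)| / |x (s + 1) - x s| ^ p) atTop (nhds Q) :=
  Cprime_order_of_C_order_general x xstar p Q hp hconv hpos hC
end

section
/- Let (e_s) be a sequence of positive real numbers with e_s → 0. If for some p > 1 and Q ∈ (0, ∞) one has e_{s+1}/(e_s)^p → Q, then (ln e_{s+1})/(ln e_s) → p; that is, C-order p (with p > 1) implies Q-order p. -/
/-!
Writing `ln e_{s+1} = p ln e_s + ln (e_{s+1} / e_s ^ p)`, the second summand tends to `ln Q`,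
so it is negligible against `ln e_s → -∞` and the quotient `ln e_{s+1} / ln e_s` tends to `p`.
-/

open Filter Topology

theorem Filter.Tendsto.div_tendsto_of_tendsto_sub_mul {α : Type*} {l : Filter α} {a b : α → ℝ}
    {p c : ℝ} (ha : Tendsto a l atBot) (hba : Tendsto (fun x => b x - p * a x) l (𝓝 c)) :
    Tendsto (fun x => b x / a x) l (𝓝 p) := by
  have hsmall : Tendsto (fun x => (b x - p * a x) / a x + p) l (𝓝 (0 + p)) :=
    (hba.div_atBot ha).add_const p
  rw [zero_add] at hsmall
  refine hsmall.congr' ?_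
  filter_upwards [ha.eventually_ne_atBot 0] with x hx
  field_simp
  ring

theorem Real.tendsto_log_comp_atBot {α : Type*} {l : Filter α} {u : α → ℝ}
    (hpos : ∀ᶠ x in l, 0 < u x) (hu : Tendsto u l (𝓝 0)) :
    Tendsto (fun x => Real.log (u x)) l atBot :=
  Real.tendsto_log_nhdsGT_zero.comp
    (tendsto_nhdsWithin_of_tendsto_nhds_of_eventually_within _ hu hpos)

theorem Real.log_div_rpow_eq_sub_mul_log {x y : ℝ} (hx : 0 < x) (hy : 0 < y) (p : ℝ) :
    Real.log (x / y ^ p) = Real.log x - p * Real.log y := by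
  rw [Real.log_div hx.ne' (Real.rpow_pos_of_pos hy p).ne', Real.log_rpow hy]

theorem Q_order_of_C_order_general
    (e : ℕ → ℝ) (p Q : ℝ)
    (hpos : ∀ s, 0 < e s)
    (hlim : Tendsto e atTop (nhds 0))
    (hQ : 0 < Q)
    (hC : Tendsto (fun s => e (s + 1) / e s ^ p) atTop (nhds Q)) :
    Tendsto (fun s => Real.log (e (s + 1)) / Real.log (e s)) atTop (nhds p) := by
  have hlogC : Tendsto (fun s => Real.log (e (s + 1)) - p * Real.log (e s)) atTop
      (𝓝 (Real.log Q)) := by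
    simpa only [Real.log_div_rpow_eq_sub_mul_log (hpos _) (hpos _)] using hC.log hQ.ne'
  exact (Real.tendsto_log_comp_atBot (.of_forall hpos) hlim).div_tendsto_of_tendsto_sub_mul hlogC

/-- C-order `p > 1` implies Q-order `p`. -/
theorem Q_order_of_C_order
    (e : ℕ → ℝ) (p Q : ℝ)
    (hpos : ∀ s, 0 < e s)
    (hlim : Tendsto e atTop (nhds 0))
    (hp : 1 < p) (hQ : 0 < Q)
    (hC : Tendsto (fun s => e (s + 1) / e s ^ p) atTop (nhds Q)) :
    Tendsto (fun s => Real.log (e (s + 1)) / Real.log (e s)) atTop (nhds p) :=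
  Q_order_of_C_order_general e p Q hpos hlim hQ hC
end

section
/- Let (x_s) be a sequence of real numbers converging to x*, with errors e_s = |x* - x_s| satisfying 0 < e_s < 1 for all s. Suppose the errors have Q-order p for some p > 1, i.e. (ln e_{s+1})/(ln e_s) → p. Then the corrections c_s = |x_{s+1} - x_s| are eventually positive and satisfy (ln c_{s+1})/(ln c_s) → p; that is, Q-order p implies Q'-order p. -/
/-!
With `L s = log e_s → -∞`, the hypothesis `L (s+1) / L s → p > 1` forces
`L (s+1) - L s = (L (s+1) / L s - 1) L s → -∞`, i.e. `e_{s+1} / e_s → 0`: the convergence is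
superlinear. Since `|c_s - e_s| ≤ e_{s+1}` by the triangle inequality, `c_s / e_s → 1`, so
`log c_s = L s + o(1)` and the quotients of logarithms of the corrections have the same limit as
those of the errors.
-/

open Filter Topology

section LogRatio

variable {α : Type*} {l : Filter α}

theorem tendsto_sub_atBot_of_div_tendsto {u v : α → ℝ} {p : ℝ} (hp : 1 < p)
    (hv : Tendsto v l atBot) (h : Tendsto (fun a => u a / v a) l (𝓝 p)) :
    Tendsto (fun a => u a - v a) l atBot := by
  have hprod : Tendsto (fun a => (u a / v a - 1) * v a) l atBot :=
    (h.sub_const 1).pos_mul_atBot (by linarith) hv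
  refine hprod.congr' ?_
  filter_upwards [hv.eventually_ne_atBot 0] with a ha
  field_simp

theorem tendsto_div_zero_of_log_div_tendsto {u v : α → ℝ} {p : ℝ} (hp : 1 < p)
    (hu : ∀ᶠ a in l, 0 < u a) (hv : ∀ᶠ a in l, 0 < v a)
    (hlog : Tendsto (fun a => Real.log (v a)) l atBot)
    (h : Tendsto (fun a => Real.log (u a) / Real.log (v a)) l (𝓝 p)) :
    Tendsto (fun a => u a / v a) l (𝓝 0) := by
  refine (Real.tendsto_exp_atBot.comp (tendsto_sub_atBot_of_div_tendsto hp hlog h)).congr' ?_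
  filter_upwards [hu, hv] with a hua hva
  simp only [Function.comp_apply, Real.exp_sub, Real.exp_log hua, Real.exp_log hva]

theorem tendsto_div_one_of_abs_sub_le {c e f : α → ℝ} (he : ∀ᶠ a in l, 0 < e a)
    (hce : ∀ᶠ a in l, |c a - e a| ≤ f a) (hf : Tendsto (fun a => f a / e a) l (𝓝 0)) :
    Tendsto (fun a => c a / e a) l (𝓝 1) := by
  rw [← tendsto_sub_nhds_zero_iff, tendsto_zero_iff_abs_tendsto_zero]
  refine squeeze_zero' (Eventually.of_forall fun a => abs_nonneg _) ?_ hf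
  filter_upwards [he, hce] with a hea hcea
  rw [Function.comp_apply, div_sub_one hea.ne', abs_div, abs_of_pos hea]
  exact div_le_div_of_nonneg_right hcea hea.le

theorem tendsto_log_div_log_of_div_tendsto_one {u v : α → ℝ}
    (hlog : Tendsto (fun a => Real.log (v a)) l atBot) (h : Tendsto (fun a => u a / v a) l (𝓝 1)) :
    Tendsto (fun a => Real.log (u a) / Real.log (v a)) l (𝓝 1) := by
  have hsmall : Tendsto (fun a => Real.log (u a / v a) / Real.log (v a)) l (𝓝 0) :=
    ((Real.continuousAt_log one_ne_zero).tendsto.comp h).div_atBot hlog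
  have hlim := hsmall.add_const 1
  rw [zero_add] at hlim
  refine hlim.congr' ?_
  filter_upwards [h.eventually_ne one_ne_zero, hlog.eventually_ne_atBot 0] with a hquot hloga
  have hua : u a ≠ 0 := fun hua => by simp [hua] at hquot
  have hva : v a ≠ 0 := fun hva => by simp [hva] at hquot
  rw [Real.log_div hua hva]
  field_simp
  ring

end LogRatio

theorem Qprime_order_of_Q_order_general
    (x : ℕ → ℝ) (xstar : ℝ) (p : ℝ)
    (hconv : Tendsto x atTop (nhds xstar))
    (hpos : ∀ s, 0 < |xstar - x s|)
    (hp : 1 < p)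
    (hQ : Tendsto (fun s => Real.log |xstar - x (s + 1)| / Real.log |xstar - x s|)
      atTop (nhds p)) :
    (∀ᶠ s in atTop, 0 < |x (s + 1) - x s|) ∧
      Tendsto (fun s => Real.log |x (s + 2) - x (s + 1)| / Real.log |x (s + 1) - x s|)
        atTop (nhds p) := by
  set e : ℕ → ℝ := fun s => |xstar - x s|
  set c : ℕ → ℝ := fun s => |x (s + 1) - x s|
  have he : Tendsto e atTop (𝓝[>] 0) := by
    refine tendsto_nhdsWithin_of_tendsto_nhds_of_eventually_within _ ?_ (.of_forall hpos)
    simpa using (hconv.const_sub xstar).abs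
  have hlog : Tendsto (fun s => Real.log (e s)) atTop atBot :=
    Real.tendsto_log_nhdsGT_zero.comp he
  have hsuperlinear : Tendsto (fun s => e (s + 1) / e s) atTop (𝓝 0) :=
    tendsto_div_zero_of_log_div_tendsto hp (.of_forall fun s => hpos (s + 1)) (.of_forall hpos)
      hlog hQ
  have hce : Tendsto (fun s => c s / e s) atTop (𝓝 1) := by
    refine tendsto_div_one_of_abs_sub_le (.of_forall hpos) (.of_forall fun s => ?_) hsuperlinear
    have := abs_abs_sub_abs_le_abs_sub (x (s + 1) - x s) (xstar - x s)
    rw [sub_sub_sub_cancel_right, abs_sub_comm _ xstar] at this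
    exact this
  have hcpos : ∀ᶠ s in atTop, 0 < c s := by
    filter_upwards [hce.eventually (eventually_gt_nhds one_pos)] with s hs
    exact (div_pos_iff_of_pos_right (hpos s)).mp hs
  have hlogc := tendsto_log_div_log_of_div_tendsto_one hlog hce
  refine ⟨hcpos, ?_⟩
  -- `log c' / log c = (log c' / log e') * (log e' / log e) / (log c / log e)`
  have hlim := ((hlogc.comp (tendsto_add_atTop_nat 1)).mul hQ).div hlogc one_ne_zero
  rw [one_mul, div_one] at hlim
  refine hlim.congr' ?_
  filter_upwards [hlog.eventually_ne_atBot 0,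
    (tendsto_add_atTop_nat 1).eventually (hlog.eventually_ne_atBot 0)] with s hs hs1
  simp only [Pi.div_apply, Function.comp_apply]
  rw [div_mul_div_cancel₀ hs1, div_div_div_cancel_right₀ hs]

/-- Q-order `p > 1` of the errors implies Q'-order `p` of the corrections. -/
theorem Qprime_order_of_Q_order
    (x : ℕ → ℝ) (xstar : ℝ) (p : ℝ)
    (hconv : Tendsto x atTop (nhds xstar))
    (hpos : ∀ s, 0 < |xstar - x s|) (hlt : ∀ s, |xstar - x s| < 1)
    (hp : 1 < p)
    (hQ : Tendsto (fun s => Real.log |xstar - x (s + 1)| / Real.log |xstar - x s|)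
      atTop (nhds p)) :
    (∀ᶠ s in atTop, 0 < |x (s + 1) - x s|) ∧
      Tendsto (fun s => Real.log |x (s + 2) - x (s + 1)| / Real.log |x (s + 1) - x s|)
        atTop (nhds p) :=
  Qprime_order_of_Q_order_general x xstar p hconv hpos hp hQ
end

section
/- Let (e_s) be a sequence of positive real numbers with e_s → 0, and suppose that for some p > 1 and Q ∈ (0, ∞) one has e_{s+1}/(e_s)^p → Q. Then |ln e_s|^{1/s} → p; that is, C-order p (with p > 1) implies R-order p. -/
/-!
With `L s = log (e s) → -∞`, C-order says `L (s + 1) - p * L s → log Q`, hence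
`L (s + 1) / L s → p`. So the increments of `log |L s|` tend to `log p`, and by Cesàro
`log |L s| / s → log p`, i.e. `|L s| ^ (1 / s) → p`: the ratio test implies the root test.
-/

open Filter Topology Finset Real

theorem tendsto_div_natCast_of_tendsto_sub {a : ℕ → ℝ} {l : ℝ}
    (h : Tendsto (fun n => a (n + 1) - a n) atTop (𝓝 l)) :
    Tendsto (fun n : ℕ => a n / n) atTop (𝓝 l) := by
  have htelescope : ∀ n, a n = a 0 + ∑ i ∈ range n, (a (i + 1) - a i) := fun n => by
    rw [sum_range_sub]; ring
  have hconst : Tendsto (fun n : ℕ => a 0 / n) atTop (𝓝 0) :=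
    tendsto_const_div_atTop_nhds_zero_nat (a 0)
  have hsum := hconst.add h.cesaro
  rw [zero_add] at hsum
  refine hsum.congr fun n => ?_
  rw [htelescope n, add_div, inv_mul_eq_div]

theorem tendsto_rpow_one_div_natCast_of_tendsto_div {b : ℕ → ℝ} {l : ℝ}
    (hb : ∀ᶠ n in atTop, 0 < b n) (hl : 0 < l)
    (h : Tendsto (fun n => b (n + 1) / b n) atTop (𝓝 l)) :
    Tendsto (fun n : ℕ => b n ^ (1 / (n : ℝ))) atTop (𝓝 l) := by
  have hlog : Tendsto (fun n => log (b (n + 1)) - log (b n)) atTop (𝓝 (log l)) := by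
    refine ((continuousAt_log hl.ne').tendsto.comp h).congr' ?_
    filter_upwards [hb, (tendsto_add_atTop_nat 1).eventually hb] with n hn hn1
    exact log_div hn1.ne' hn.ne'
  have hexp := (continuous_exp.tendsto _).comp
    (tendsto_div_natCast_of_tendsto_sub (a := fun n => log (b n)) hlog)
  rw [exp_log hl] at hexp
  refine hexp.congr' ?_
  filter_upwards [hb] with n hn
  rw [rpow_def_of_pos hn, Function.comp_apply, mul_one_div]

theorem tendsto_succ_div_of_tendsto_sub_mul {L : ℕ → ℝ} {p c : ℝ} (hL : Tendsto L atTop atBot)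
    (h : Tendsto (fun n => L (n + 1) - p * L n) atTop (𝓝 c)) :
    Tendsto (fun n => L (n + 1) / L n) atTop (𝓝 p) := by
  have hp := (h.div_atBot hL).const_add p
  rw [add_zero] at hp
  refine hp.congr' ?_
  filter_upwards [hL.eventually_lt_atBot 0] with n hn
  field_simp [hn.ne]
  ring

/-- C-order `p > 1` implies R-order `p`. -/
theorem R_order_of_C_order
    (e : ℕ → ℝ) (p Q : ℝ)
    (hpos : ∀ s, 0 < e s)
    (hlim : Tendsto e atTop (nhds 0))
    (hp : 1 < p) (hQ : 0 < Q)
    (hC : Tendsto (fun s => e (s + 1) / e s ^ p) atTop (nhds Q)) :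
    Tendsto (fun s => |Real.log (e s)| ^ (1 / (s : ℝ))) atTop (nhds p) := by
  have hlog_atBot : Tendsto (fun s => log (e s)) atTop atBot :=
    tendsto_log_nhdsGT_zero.comp
      (tendsto_nhdsWithin_of_tendsto_nhds_of_eventually_within _ hlim (.of_forall hpos))
  have hdefect : Tendsto (fun s => log (e (s + 1)) - p * log (e s)) atTop (𝓝 (log Q)) := by
    refine ((continuousAt_log hQ.ne').tendsto.comp hC).congr fun s => ?_
    rw [Function.comp_apply, log_div (hpos _).ne' (rpow_pos_of_pos (hpos s) p).ne',
      log_rpow (hpos s)]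
  have hratio := (tendsto_succ_div_of_tendsto_sub_mul hlog_atBot hdefect).abs
  rw [abs_of_pos (by linarith)] at hratio
  refine tendsto_rpow_one_div_natCast_of_tendsto_div ?_ (by linarith) ?_
  · filter_upwards [hlog_atBot.eventually_lt_atBot 0] with s hs
    exact abs_pos.mpr hs.ne
  · simpa only [abs_div] using hratio
end

section
/- There exists a sequence of real numbers (x_s) converging to a limit x* whose errors e_s = |x* - x_s| are positive and converge C-linearly, i.e. e_{s+1}/e_s → Q for some Q ∈ (0, 1), but whose corrections c_s = |x_{s+1} - x_s| are positive and the ratio c_{s+1}/c_s does not converge; that is, C-linear order does not imply C'-linear order. -/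
/-!
Take `x_s = (-1)^⌊s/2⌋ q^s` with `0 < q < 1`, so `x* = 0` and `e_s = q^s`: the errors have the
constant ratio `q`. The sign flips only at every second step, so consecutive iterates alternately
lie on the same side of `0` (correction `q^s (1 - q)`) and on opposite sides (correction
`q^s (1 + q)`), and the correction ratio alternates between `q (1 + q) / (1 - q)` and
`q (1 - q) / (1 + q)`.
-/

open Filter

theorem not_exists_tendsto_of_even_odd {X : Type*} [TopologicalSpace X] [T1Space X]
    {f : ℕ → X} {a b : X} (hab : a ≠ b) (heven : ∀ k, f (2 * k) = a)
    (hodd : ∀ k, f (2 * k + 1) = b) : ¬ ∃ l, Tendsto f atTop (nhds l) := by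
  rintro ⟨l, hl⟩
  have h_even : Tendsto (fun k => f (2 * k)) atTop (nhds l) :=
    hl.comp (StrictMono.tendsto_atTop fun _ _ h => by omega)
  have h_odd : Tendsto (fun k => f (2 * k + 1)) atTop (nhds l) :=
    hl.comp (StrictMono.tendsto_atTop fun _ _ h => by omega)
  simp only [heven, hodd, tendsto_const_nhds_iff] at h_even h_odd
  exact hab (h_even.trans h_odd.symm)

noncomputable def signedGeometric (q : ℝ) (s : ℕ) : ℝ := (-1) ^ (s / 2) * q ^ s

namespace signedGeometric

variable {q : ℝ}

theorem abs_apply (hq : 0 ≤ q) (s : ℕ) : |signedGeometric q s| = q ^ s := by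
  simp [signedGeometric, abs_of_nonneg hq]

theorem tendsto_zero (hq₀ : 0 ≤ q) (hq₁ : q < 1) :
    Tendsto (signedGeometric q) atTop (nhds 0) :=
  squeeze_zero_norm (fun s => (abs_apply hq₀ s).le)
    (tendsto_pow_atTop_nhds_zero_of_lt_one hq₀ hq₁)

theorem abs_sub_even (hq₀ : 0 ≤ q) (hq₁ : q ≤ 1) (k : ℕ) :
    |signedGeometric q (2 * k + 1) - signedGeometric q (2 * k)| = q ^ (2 * k) * (1 - q) := by
  have h : signedGeometric q (2 * k + 1) - signedGeometric q (2 * k)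
      = -((-1) ^ k * (q ^ (2 * k) * (1 - q))) := by
    simp only [signedGeometric, show (2 * k + 1) / 2 = k by omega, show 2 * k / 2 = k by omega]
    ring
  rw [h, abs_neg, abs_mul, abs_pow, abs_neg, abs_one, one_pow, one_mul, abs_of_nonneg]
  exact mul_nonneg (pow_nonneg hq₀ _) (sub_nonneg.mpr hq₁)

theorem abs_sub_odd (hq : 0 ≤ q) (k : ℕ) :
    |signedGeometric q (2 * k + 2) - signedGeometric q (2 * k + 1)|
      = q ^ (2 * k + 1) * (1 + q) := by
  have h : signedGeometric q (2 * k + 2) - signedGeometric q (2 * k + 1)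
      = -((-1) ^ k * (q ^ (2 * k + 1) * (1 + q))) := by
    simp only [signedGeometric, show (2 * k + 2) / 2 = k + 1 by omega,
      show (2 * k + 1) / 2 = k by omega]
    ring
  rw [h, abs_neg, abs_mul, abs_pow, abs_neg, abs_one, one_pow, one_mul, abs_of_nonneg]
  positivity

theorem abs_sub_pos (hq₀ : 0 < q) (hq₁ : q < 1) (s : ℕ) :
    0 < |signedGeometric q (s + 1) - signedGeometric q s| := by
  obtain ⟨k, rfl | rfl⟩ := Nat.even_or_odd' s
  · rw [abs_sub_even hq₀.le hq₁.le]
    exact mul_pos (pow_pos hq₀ _) (sub_pos.mpr hq₁)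
  · rw [abs_sub_odd hq₀.le]
    positivity

theorem abs_succ_div_abs (hq₀ : 0 < q) (s : ℕ) :
    |signedGeometric q (s + 1)| / |signedGeometric q s| = q := by
  rw [abs_apply hq₀.le, abs_apply hq₀.le, pow_succ, mul_div_cancel_left₀ _ (pow_pos hq₀ s).ne']

theorem correction_ratio_even (hq₀ : 0 < q) (hq₁ : q < 1) (k : ℕ) :
    |signedGeometric q (2 * k + 2) - signedGeometric q (2 * k + 1)|
      / |signedGeometric q (2 * k + 1) - signedGeometric q (2 * k)| = q * (1 + q) / (1 - q) := by
  rw [abs_sub_odd hq₀.le, abs_sub_even hq₀.le hq₁.le, pow_succ]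
  have : 0 < q ^ (2 * k) := pow_pos hq₀ _
  have : 0 < 1 - q := sub_pos.mpr hq₁
  field_simp

theorem correction_ratio_odd (hq₀ : 0 < q) (hq₁ : q < 1) (k : ℕ) :
    |signedGeometric q (2 * k + 1 + 2) - signedGeometric q (2 * k + 1 + 1)|
      / |signedGeometric q (2 * k + 1 + 1) - signedGeometric q (2 * k + 1)|
      = q * (1 - q) / (1 + q) := by
  change |signedGeometric q (2 * (k + 1) + 1) - signedGeometric q (2 * (k + 1))|
      / |signedGeometric q (2 * k + 2) - signedGeometric q (2 * k + 1)| = _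
  rw [abs_sub_even hq₀.le hq₁.le, abs_sub_odd hq₀.le, mul_add_one, pow_succ, pow_succ]
  have : 0 < q ^ (2 * k) := pow_pos hq₀ _
  field_simp

theorem not_exists_tendsto_correction_ratio (hq₀ : 0 < q) (hq₁ : q < 1) :
    ¬ ∃ l, Tendsto (fun s => |signedGeometric q (s + 2) - signedGeometric q (s + 1)|
      / |signedGeometric q (s + 1) - signedGeometric q s|) atTop (nhds l) := by
  refine not_exists_tendsto_of_even_odd ?_ (correction_ratio_even hq₀ hq₁)
    (correction_ratio_odd hq₀ hq₁)
  have : 0 < 1 - q := sub_pos.mpr hq₁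
  rw [Ne, div_eq_div_iff this.ne' (by positivity)]
  nlinarith [mul_pos hq₀ hq₀]

end signedGeometric

/-- There is a convergent sequence whose errors converge C-linearly but whose
corrections' ratio does not converge: C-linear order does not imply C'-linear order. -/
theorem C_linear_not_imp_Cprime_linear :
    ∃ (x : ℕ → ℝ) (xstar Q : ℝ),
      Tendsto x atTop (nhds xstar) ∧
      (∀ s, 0 < |xstar - x s|) ∧
      0 < Q ∧ Q < 1 ∧
      Tendsto (fun s => |xstar - x (s + 1)| / |xstar - x s|) atTop (nhds Q) ∧
      (∀ s, 0 < |x (s + 1) - x s|) ∧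
      ¬ ∃ l : ℝ, Tendsto (fun s => |x (s + 2) - x (s + 1)| / |x (s + 1) - x s|)
        atTop (nhds l) := by
  have hq₀ : (0 : ℝ) < 1 / 2 := by norm_num
  have hq₁ : (1 / 2 : ℝ) < 1 := by norm_num
  refine ⟨signedGeometric (1 / 2), 0, 1 / 2, signedGeometric.tendsto_zero hq₀.le hq₁,
    fun s => ?_, hq₀, hq₁, ?_, signedGeometric.abs_sub_pos hq₀ hq₁,
    signedGeometric.not_exists_tendsto_correction_ratio hq₀ hq₁⟩
  · rw [zero_sub, abs_neg, signedGeometric.abs_apply hq₀.le]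
    exact pow_pos hq₀ s
  · simp only [zero_sub, abs_neg, signedGeometric.abs_succ_div_abs hq₀]
    exact tendsto_const_nhds
end

section
/- Let θ : ℝ → ℝ be differentiable, let D : ℝ → ℝ be Lipschitz continuous with constant L_D ≥ 0, and let L, Δt, Δz > 0 and m > 0 be constants such that m ≤ θ'(x) ≤ L for all x ∈ ℝ. Fix ψ ∈ ℝ and let (e_s) be a sequence of real numbers satisfying, for every s, the fixed-point error recursion L·(e_{s+1} − e_s) + θ(ψ + e_s) − θ(ψ) = (Δt/Δz²)·(D(ψ + e_s) − D(ψ)). Then for every s, |e_{s+1}| ≤ q·|e_s|, where q = 1 − (m − L_D·Δt/Δz²)/L. Moreover, if m > L_D·Δt/Δz², then 0 ≤ q < 1, so the recursion is a contraction. -/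
/-! The map `x ↦ L x - θ x` has derivative in `[0, L - m]`, so by the mean value theorem it is
`(L - m)`-Lipschitz. Rewriting the recursion as
`L e_{s+1} = (L e_s - (θ(ψ + e_s) - θ ψ)) + (Δt/Δz²) (D(ψ + e_s) - D ψ)`, the first term is at most
`(L - m) |e_s|` and the second at most `(Δt/Δz²) L_D |e_s|` in absolute value; dividing by `L`
gives the factor `q`. -/

theorem abs_mul_sub_sub_le_of_deriv_mem_Icc {θ : ℝ → ℝ} {m L : ℝ} (hθ : Differentiable ℝ θ)
    (hderiv : ∀ x, deriv θ x ∈ Set.Icc m L) (a b : ℝ) :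
    |L * (b - a) - (θ b - θ a)| ≤ (L - m) * |b - a| := by
  have hg : Differentiable ℝ fun x => L * x - θ x := (differentiable_id.const_mul L).sub hθ
  have hg' : ∀ x, deriv (fun x => L * x - θ x) x = L - deriv θ x := fun x => by
    simpa using ((hasDerivAt_id x).const_mul L).fun_sub (hθ x).hasDerivAt |>.deriv
  have bound : ∀ x ∈ Set.univ, ‖deriv (fun x => L * x - θ x) x‖ ≤ L - m := fun x _ => by
    rw [hg', Real.norm_eq_abs, abs_le]
    constructor <;> linarith [hderiv x |>.1, hderiv x |>.2]
  have := convex_univ.norm_image_sub_le_of_norm_deriv_le (fun x _ => hg x) bound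
    (Set.mem_univ a) (Set.mem_univ b)
  simp only [Real.norm_eq_abs] at this
  convert this using 2
  ring

theorem abs_le_of_L_scheme_step {L k LD m e e' Δθ ΔD : ℝ} (hL : 0 < L) (hk : 0 ≤ k)
    (hΔθ : |L * e - Δθ| ≤ (L - m) * |e|) (hΔD : |ΔD| ≤ LD * |e|)
    (hrec : L * (e' - e) + Δθ = k * ΔD) :
    |e'| ≤ (1 - (m - LD * k) / L) * |e| := by
  have hsplit : L * e' = (L * e - Δθ) + k * ΔD := by linarith
  have hstep : L * |e'| ≤ (L - m) * |e| + k * (LD * |e|) :=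
    calc L * |e'| = |(L * e - Δθ) + k * ΔD| := by rw [← hsplit, abs_mul, abs_of_pos hL]
      _ ≤ |L * e - Δθ| + k * |ΔD| :=
          (abs_add_le _ _).trans_eq (by rw [abs_mul, abs_of_nonneg hk])
      _ ≤ (L - m) * |e| + k * (LD * |e|) := by gcongr
  have hfactor : (1 - (m - LD * k) / L) * |e| = ((L - m) * |e| + k * (LD * |e|)) / L := by
    field_simp
    ring
  rwa [hfactor, le_div_iff₀' hL]

theorem one_sub_div_mem_Ico {c m L : ℝ} (hL : 0 < L) (hc : 0 ≤ c) (hmL : m ≤ L) (hcm : c < m) :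
    1 - (m - c) / L ∈ Set.Ico 0 1 := by
  constructor
  · rw [sub_nonneg, div_le_one hL]
    linarith
  · linarith [div_pos (sub_pos.2 hcm) hL]

theorem L_scheme_contraction_step_general
    (θ D : ℝ → ℝ) (LD L Δt Δz m : ℝ)
    (hθ : Differentiable ℝ θ)
    (hD : ∀ a b : ℝ, |D a - D b| ≤ LD * |a - b|)
    (hL : 0 < L) (hΔt : 0 < Δt)
    (hderiv : ∀ x : ℝ, m ≤ deriv θ x ∧ deriv θ x ≤ L)
    (ψ : ℝ) (e : ℕ → ℝ)
    (hrec : ∀ s : ℕ,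
      L * (e (s + 1) - e s) + θ (ψ + e s) - θ ψ
        = (Δt / Δz ^ 2) * (D (ψ + e s) - D ψ)) :
    (∀ s : ℕ, |e (s + 1)| ≤ (1 - (m - LD * Δt / Δz ^ 2) / L) * |e s|) ∧
      (LD * Δt / Δz ^ 2 < m →
        0 ≤ 1 - (m - LD * Δt / Δz ^ 2) / L ∧ 1 - (m - LD * Δt / Δz ^ 2) / L < 1) := by
  have hLD : 0 ≤ LD := by simpa using (abs_nonneg _).trans (hD 1 0)
  have hk : 0 ≤ Δt / Δz ^ 2 := div_nonneg hΔt.le (sq_nonneg Δz)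
  rw [mul_div_assoc]
  refine ⟨fun s => abs_le_of_L_scheme_step (Δθ := θ (ψ + e s) - θ ψ) (ΔD := D (ψ + e s) - D ψ)
      hL hk ?_ ?_ (by rw [← hrec s]; ring),
    one_sub_div_mem_Ico hL (mul_nonneg hLD hk) ((hderiv 0).1.trans (hderiv 0).2)⟩
  · simpa using abs_mul_sub_sub_le_of_deriv_mem_Icc hθ hderiv ψ (ψ + e s)
  · simpa using hD (ψ + e s) ψ

/-- One-step contraction estimate for the error recursion of the explicit FDM
`L`-scheme for Richards' equation. -/
theorem L_scheme_contraction_step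
    (θ D : ℝ → ℝ) (LD L Δt Δz m : ℝ)
    (hθ : Differentiable ℝ θ)
    (hLD : 0 ≤ LD)
    (hD : ∀ a b : ℝ, |D a - D b| ≤ LD * |a - b|)
    (hL : 0 < L) (hΔt : 0 < Δt) (hΔz : 0 < Δz) (hm : 0 < m)
    (hderiv : ∀ x : ℝ, m ≤ deriv θ x ∧ deriv θ x ≤ L)
    (ψ : ℝ) (e : ℕ → ℝ)
    (hrec : ∀ s : ℕ,
      L * (e (s + 1) - e s) + θ (ψ + e s) - θ ψ
        = (Δt / Δz ^ 2) * (D (ψ + e s) - D ψ)) :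
    (∀ s : ℕ, |e (s + 1)| ≤ (1 - (m - LD * Δt / Δz ^ 2) / L) * |e s|) ∧
      (LD * Δt / Δz ^ 2 < m →
        0 ≤ 1 - (m - LD * Δt / Δz ^ 2) / L ∧ 1 - (m - LD * Δt / Δz ^ 2) / L < 1) :=
  L_scheme_contraction_step_general θ D LD L Δt Δz m hθ hD hL hΔt hderiv ψ e hrec
end

section
/- Let θ : ℝ → ℝ be differentiable, let D : ℝ → ℝ be Lipschitz continuous with constant L_D ≥ 0, and let L, Δt, Δz > 0 and m > 0 be constants such that m ≤ θ'(x) ≤ L for all x ∈ ℝ and m > L_D·Δt/Δz². Fix ψ ∈ ℝ and let (e_s) be a sequence of real numbers satisfying, for every s, L·(e_{s+1} − e_s) + θ(ψ + e_s) − θ(ψ) = (Δt/Δz²)·(D(ψ + e_s) − D(ψ)). Then |e_s| ≤ q^s·|e_0| for all s, where q = 1 − (m − L_D·Δt/Δz²)/L ∈ [0,1); in particular e_s → 0, i.e. the explicit L-scheme iterates converge (at least linearly) to the solution of the implicit scheme. -/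
/-!
Subtracting `θ(ψ + e) - θ(ψ)` from `L e` leaves the increment of `x ↦ L x - θ x`, whose
derivative lies in `[0, L - m]`; the increment of `D` is at most `L_D |e|`. Hence one step of
the recursion multiplies `|e|` by at most `(L - m + L_D Δt/Δz²)/L = q`, and `q < 1` is exactly
the condition `m > L_D Δt/Δz²`.
-/

open Filter

theorem abs_mul_sub_sub_sub_le_of_deriv_mem {θ : ℝ → ℝ} {m L : ℝ} (hθ : Differentiable ℝ θ)
    (hderiv : ∀ x, m ≤ deriv θ x ∧ deriv θ x ≤ L) (a b : ℝ) :
    |L * (a - b) - (θ a - θ b)| ≤ (L - m) * |a - b| := by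
  have hasDeriv : ∀ x, HasDerivAt (fun y ↦ L * y - θ y) (L - deriv θ x) x := fun x ↦
    ((hasDerivAt_id x).const_mul L).sub (hθ x).hasDerivAt |>.congr_deriv (by simp)
  have deriv_le : ∀ x ∈ Set.univ, ‖deriv (fun y ↦ L * y - θ y) x‖ ≤ L - m := fun x _ ↦ by
    rw [(hasDeriv x).deriv, Real.norm_eq_abs, abs_le]
    constructor <;> linarith [hderiv x]
  have := convex_univ.norm_image_sub_le_of_norm_deriv_le
    (fun x _ ↦ (hasDeriv x).differentiableAt) deriv_le (Set.mem_univ b) (Set.mem_univ a)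
  rw [Real.norm_eq_abs, Real.norm_eq_abs] at this
  rwa [mul_sub, sub_sub_sub_comm]

theorem abs_le_of_lScheme_step {θ D : ℝ → ℝ} {LD L m k ψ e e' : ℝ} (hθ : Differentiable ℝ θ)
    (hderiv : ∀ x, m ≤ deriv θ x ∧ deriv θ x ≤ L) (hD : ∀ a b, |D a - D b| ≤ LD * |a - b|)
    (hL : 0 < L) (hk : 0 ≤ k)
    (hstep : L * (e' - e) + θ (ψ + e) - θ ψ = k * (D (ψ + e) - D ψ)) :
    |e'| ≤ (1 - (m - LD * k) / L) * |e| := by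
  have hsplit : L * e' = (L * e - (θ (ψ + e) - θ ψ)) + k * (D (ψ + e) - D ψ) := by
    linear_combination hstep
  have hθ_incr := abs_mul_sub_sub_sub_le_of_deriv_mem hθ hderiv (ψ + e) ψ
  have hD_incr := hD (ψ + e) ψ
  simp only [add_sub_cancel_left] at hθ_incr hD_incr
  have hscaled : L * |e'| ≤ (L - m + LD * k) * |e| := calc
    L * |e'| = |L * e'| := by rw [abs_mul, abs_of_pos hL]
    _ ≤ |L * e - (θ (ψ + e) - θ ψ)| + k * |D (ψ + e) - D ψ| := by
      rw [hsplit]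
      exact (abs_add_le _ _).trans_eq (by rw [abs_mul, abs_of_nonneg hk])
    _ ≤ (L - m) * |e| + k * (LD * |e|) := by gcongr
    _ = (L - m + LD * k) * |e| := by ring
  rw [← mul_le_mul_iff_of_pos_left hL]
  refine hscaled.trans_eq ?_
  field_simp
  ring

theorem L_scheme_linear_convergence_general
    (θ D : ℝ → ℝ) (LD L Δt Δz m : ℝ)
    (hθ : Differentiable ℝ θ)
    (hLD : 0 ≤ LD)
    (hD : ∀ a b : ℝ, |D a - D b| ≤ LD * |a - b|)
    (hL : 0 < L) (hΔt : 0 < Δt)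
    (hderiv : ∀ x : ℝ, m ≤ deriv θ x ∧ deriv θ x ≤ L)
    (hcond : LD * Δt / Δz ^ 2 < m)
    (ψ : ℝ) (e : ℕ → ℝ)
    (hrec : ∀ s : ℕ,
      L * (e (s + 1) - e s) + θ (ψ + e s) - θ ψ
        = (Δt / Δz ^ 2) * (D (ψ + e s) - D ψ)) :
    (0 ≤ 1 - (m - LD * Δt / Δz ^ 2) / L) ∧
      (1 - (m - LD * Δt / Δz ^ 2) / L < 1) ∧
      (∀ s : ℕ, |e s| ≤ (1 - (m - LD * Δt / Δz ^ 2) / L) ^ s * |e 0|) ∧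
      Tendsto e atTop (nhds 0) := by
  set q := 1 - (m - LD * Δt / Δz ^ 2) / L
  have hmL : m ≤ L := (hderiv 0).1.trans (hderiv 0).2
  have hq_nonneg : 0 ≤ q := by
    have : (m - LD * Δt / Δz ^ 2) / L ≤ 1 := by
      rw [div_le_one hL]; linarith [show 0 ≤ LD * Δt / Δz ^ 2 by positivity]
    linarith
  have hq_lt_one : q < 1 := by
    have : 0 < (m - LD * Δt / Δz ^ 2) / L := div_pos (by linarith) hL
    linarith
  have hstep (s : ℕ) : |e (s + 1)| ≤ q * |e s| := by
    have := abs_le_of_lScheme_step hθ hderiv hD hL (by positivity) (hrec s)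
    rwa [← mul_div_assoc] at this
  have hbound (s : ℕ) : |e s| ≤ q ^ s * |e 0| :=
    le_geom (u := fun s ↦ |e s|) hq_nonneg s fun k _ ↦ hstep k
  refine ⟨hq_nonneg, hq_lt_one, hbound, squeeze_zero_norm hbound ?_⟩
  simpa using (tendsto_pow_atTop_nhds_zero_of_lt_one hq_nonneg hq_lt_one).mul_const |e 0|

/-- Linear convergence of the explicit FDM `L`-scheme iterates to the solution of
the implicit scheme: `|e_s| ≤ q^s |e_0|` with `q ∈ [0,1)`, hence `e_s → 0`. -/
theorem L_scheme_linear_convergence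
    (θ D : ℝ → ℝ) (LD L Δt Δz m : ℝ)
    (hθ : Differentiable ℝ θ)
    (hLD : 0 ≤ LD)
    (hD : ∀ a b : ℝ, |D a - D b| ≤ LD * |a - b|)
    (hL : 0 < L) (hΔt : 0 < Δt) (hΔz : 0 < Δz) (hm : 0 < m)
    (hderiv : ∀ x : ℝ, m ≤ deriv θ x ∧ deriv θ x ≤ L)
    (hcond : LD * Δt / Δz ^ 2 < m)
    (ψ : ℝ) (e : ℕ → ℝ)
    (hrec : ∀ s : ℕ,
      L * (e (s + 1) - e s) + θ (ψ + e s) - θ ψ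
        = (Δt / Δz ^ 2) * (D (ψ + e s) - D ψ)) :
    (0 ≤ 1 - (m - LD * Δt / Δz ^ 2) / L) ∧
      (1 - (m - LD * Δt / Δz ^ 2) / L < 1) ∧
      (∀ s : ℕ, |e s| ≤ (1 - (m - LD * Δt / Δz ^ 2) / L) ^ s * |e 0|) ∧
      Tendsto e atTop (nhds 0) :=
  L_scheme_linear_convergence_general θ D LD L Δt Δz m hθ hLD hD hL hΔt hderiv hcond ψ e hrec
end
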